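/- arXiv:2312.15332 — 2 statements merged into one kernel-verified Lean document; each statement's English description precedes it below -/
import Mathlib

section
/- Let A ∈ ℝ^{n×n} be stable, B ∈ ℝ^{n×m}, C ∈ ℝ^{p×n}, and γ > 0. Then there exists X ≻ 0 with A·X + X·Aᵀ + B·Bᵀ ⪯ 0 and tr(C·X·Cᵀ) ≤ γ² if and only if there exist P ≻ 0 and Γ ⪰ 0 such that [[Aᵀ·P + P·A, P·B],[Bᵀ·P, −γ·I]] ⪯ 0, [[P, Cᵀ],[C, Γ]] ⪰ 0, and tr(Γ) ≤ γ. Moreover, in both directions the certificates can be chosen related by X = γ·P⁻¹. -/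
/-!
Both LMIs are Schur complements. Eliminating the `-γ I` block turns the first one into
`-(Aᵀ P + P A + γ⁻¹ P B Bᵀ P) ⪰ 0`, which is the congruence `γ⁻¹ P (·) P` of the Lyapunov
inequality for `X = γ P⁻¹`. Eliminating `P` from the second one shows that it admits some
`Γ ⪰ 0` with `tr Γ ≤ γ` exactly when `tr (C P⁻¹ Cᵀ) ≤ γ` (take `Γ = C P⁻¹ Cᵀ`), that is,
when `tr (C X Cᵀ) ≤ γ²`.
-/

open Matrix

def IsStableMatrix {ι : Type*} [Fintype ι] [DecidableEq ι] (M : Matrix ι ι ℝ) : Prop :=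
  ∀ μ ∈ spectrum ℂ (M.map fun x => (x : ℂ)), μ.re < 0

variable {n m p : Type*}

theorem Matrix.posSemidef_smul_iff {M : Matrix n n ℝ} {c : ℝ} (hc : 0 < c) :
    (c • M).PosSemidef ↔ M.PosSemidef :=
  ⟨fun h => by simpa [smul_smul, hc.ne'] using h.smul (inv_nonneg.mpr hc.le),
    fun h => h.smul hc.le⟩

theorem Matrix.smul_nonsing_inv_smul_nonsing_inv [Fintype n] [DecidableEq n] {X : Matrix n n ℝ}
    (hX : IsUnit X.det) {γ : ℝ} (hγ : γ ≠ 0) : γ • (γ • X⁻¹)⁻¹ = X := by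
  rw [inv_eq_left_inv (B := γ⁻¹ • X), smul_smul, mul_inv_cancel₀ hγ, one_smul]
  rw [smul_mul_smul_comm, inv_mul_cancel₀ hγ, one_smul, mul_nonsing_inv _ hX]

theorem Matrix.trace_mul_smul_mul_transpose_le_sq_iff [Fintype n] [Fintype p]
    (C : Matrix p n ℝ) (M : Matrix n n ℝ) {γ : ℝ} (hγ : 0 < γ) :
    (C * (γ • M) * Cᵀ).trace ≤ γ ^ 2 ↔ (C * M * Cᵀ).trace ≤ γ := by
  rw [Matrix.mul_smul, Matrix.smul_mul, trace_smul, smul_eq_mul, sq]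
  exact mul_le_mul_iff_right₀ hγ

theorem neg_lyapunov_posSemidef_iff [Fintype n] [DecidableEq n] [Fintype m]
    {A P : Matrix n n ℝ} (B : Matrix n m ℝ) (hP : P.PosDef) {γ : ℝ} (hγ : 0 < γ) :
    (-(A * (γ • P⁻¹) + (γ • P⁻¹) * Aᵀ + B * Bᵀ)).PosSemidef ↔
      (-(Aᵀ * P + P * A + γ⁻¹ • (P * B * Bᵀ * P))).PosSemidef := by
  have hdet : IsUnit P.det := (isUnit_iff_isUnit_det _).1 hP.isUnit
  have key : γ⁻¹ • (P * -(A * (γ • P⁻¹) + (γ • P⁻¹) * Aᵀ + B * Bᵀ) * P)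
      = -(Aᵀ * P + P * A + γ⁻¹ • (P * B * Bᵀ * P)) := by
    simp only [Matrix.mul_neg, Matrix.neg_mul, Matrix.mul_add, Matrix.add_mul, Matrix.mul_smul,
      Matrix.smul_mul, Matrix.mul_assoc, nonsing_inv_mul _ hdet,
      mul_nonsing_inv_cancel_left _ _ hdet, Matrix.mul_one, smul_neg, smul_add, smul_smul,
      inv_mul_cancel₀ hγ.ne', one_smul]
    abel
  have hconj := hP.isUnit.posSemidef_star_right_conjugate_iff
    (x := -(A * (γ • P⁻¹) + (γ • P⁻¹) * Aᵀ + B * Bᵀ))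
  rw [star_eq_conjTranspose, hP.isHermitian.eq] at hconj
  rw [← hconj, ← posSemidef_smul_iff (inv_pos.2 hγ), key]

theorem neg_fromBlocks_lmi_posSemidef_iff [Fintype n] [Fintype m] [DecidableEq m]
    {A P : Matrix n n ℝ} (B : Matrix n m ℝ) (hP : P.IsHermitian) {γ : ℝ} (hγ : 0 < γ) :
    (-(fromBlocks (Aᵀ * P + P * A) (P * B) (Bᵀ * P) (-(γ • (1 : Matrix m m ℝ))))).PosSemidef ↔
      (-(Aᵀ * P + P * A + γ⁻¹ • (P * B * Bᵀ * P))).PosSemidef := by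
  have hD : (γ • (1 : Matrix m m ℝ)).PosDef := PosDef.one.smul hγ
  let := hD.isUnit.invertible
  have hDinv : (γ • (1 : Matrix m m ℝ))⁻¹ = γ⁻¹ • 1 := by
    refine inv_eq_left_inv ?_
    rw [smul_mul_smul_comm, inv_mul_cancel₀ hγ.ne', one_smul, Matrix.one_mul]
  have hBP : -(Bᵀ * P) = (-(P * B))ᴴ := by
    rw [conjTranspose_neg, conjTranspose_mul, hP.eq, conjTranspose_eq_transpose_of_trivial]
  rw [fromBlocks_neg, neg_neg, hBP, PosDef.fromBlocks₂₂ _ _ hD, hDinv, hBP.symm]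
  congr! 1
  simp only [Matrix.neg_mul, Matrix.mul_neg, Matrix.mul_smul, Matrix.mul_one, Matrix.smul_mul,
    Matrix.mul_assoc]
  module

theorem exists_fromBlocks_posSemidef_trace_le_iff [Fintype n] [DecidableEq n] [Fintype p]
    {P : Matrix n n ℝ} (hP : P.PosDef) (C : Matrix p n ℝ) (t : ℝ) :
    (∃ Γ : Matrix p p ℝ, Γ.PosSemidef ∧ (fromBlocks P Cᵀ C Γ).PosSemidef ∧ Γ.trace ≤ t) ↔
      (C * P⁻¹ * Cᵀ).trace ≤ t := by
  let := hP.isUnit.invertible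
  have schur (Γ : Matrix p p ℝ) :
      (fromBlocks P Cᵀ C Γ).PosSemidef ↔ (Γ - C * P⁻¹ * Cᵀ).PosSemidef := by
    simpa [conjTranspose_eq_transpose_of_trivial] using PosDef.fromBlocks₁₁ Cᵀ Γ hP
  constructor
  · rintro ⟨Γ, -, hblock, htr⟩
    have := ((schur Γ).1 hblock).trace_nonneg
    rw [trace_sub] at this
    linarith
  · intro h
    refine ⟨C * P⁻¹ * Cᵀ, ?_, (schur _).2 (by simpa using PosSemidef.zero), h⟩
    simpa [conjTranspose_eq_transpose_of_trivial] using
      hP.inv.posSemidef.mul_mul_conjTranspose_same C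

theorem nonstrict_lyapunov_iff_nonstrict_lmi_general {n m p : ℕ}
    (A : Matrix (Fin n) (Fin n) ℝ) (B : Matrix (Fin n) (Fin m) ℝ)
    (C : Matrix (Fin p) (Fin n) ℝ) (γ : ℝ)
    (hγ : 0 < γ) :
    ((∃ X : Matrix (Fin n) (Fin n) ℝ, X.PosDef ∧
        (-(A * X + X * Aᵀ + B * Bᵀ)).PosSemidef ∧ (C * X * Cᵀ).trace ≤ γ ^ 2) ↔
      (∃ (P : Matrix (Fin n) (Fin n) ℝ) (Γ : Matrix (Fin p) (Fin p) ℝ),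
        P.PosDef ∧ Γ.PosSemidef ∧
        (-(fromBlocks (Aᵀ * P + P * A) (P * B) (Bᵀ * P)
            (-(γ • (1 : Matrix (Fin m) (Fin m) ℝ))))).PosSemidef ∧
        (fromBlocks P Cᵀ C Γ).PosSemidef ∧ Γ.trace ≤ γ)) ∧
    (∀ X : Matrix (Fin n) (Fin n) ℝ, X.PosDef →
      (-(A * X + X * Aᵀ + B * Bᵀ)).PosSemidef → (C * X * Cᵀ).trace ≤ γ ^ 2 →
      ∃ Γ : Matrix (Fin p) (Fin p) ℝ,
        (γ • X⁻¹).PosDef ∧ Γ.PosSemidef ∧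
        (-(fromBlocks (Aᵀ * (γ • X⁻¹) + (γ • X⁻¹) * A) ((γ • X⁻¹) * B) (Bᵀ * (γ • X⁻¹))
            (-(γ • (1 : Matrix (Fin m) (Fin m) ℝ))))).PosSemidef ∧
        (fromBlocks (γ • X⁻¹) Cᵀ C Γ).PosSemidef ∧ Γ.trace ≤ γ) ∧
    (∀ (P : Matrix (Fin n) (Fin n) ℝ) (Γ : Matrix (Fin p) (Fin p) ℝ),
      P.PosDef → Γ.PosSemidef →
      (-(fromBlocks (Aᵀ * P + P * A) (P * B) (Bᵀ * P)
          (-(γ • (1 : Matrix (Fin m) (Fin m) ℝ))))).PosSemidef →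
      (fromBlocks P Cᵀ C Γ).PosSemidef → Γ.trace ≤ γ →
      (γ • P⁻¹).PosDef ∧
        (-(A * (γ • P⁻¹) + (γ • P⁻¹) * Aᵀ + B * Bᵀ)).PosSemidef ∧
        (C * (γ • P⁻¹) * Cᵀ).trace ≤ γ ^ 2) := by
  have lmi_iff {P : Matrix (Fin n) (Fin n) ℝ} (hP : P.PosDef) :=
    (neg_fromBlocks_lmi_posSemidef_iff B hP.isHermitian hγ).trans
      (neg_lyapunov_posSemidef_iff (A := A) B hP hγ).symm
  have gain_iff {P : Matrix (Fin n) (Fin n) ℝ} (hP : P.PosDef) :=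
    (exists_fromBlocks_posSemidef_trace_le_iff hP C γ).trans
      (trace_mul_smul_mul_transpose_le_sq_iff C P⁻¹ hγ).symm
  refine (fun h => ⟨⟨fun ⟨X, hX, hlyap, htr⟩ => ⟨_, h.1 X hX hlyap htr⟩,
    fun ⟨P, Γ, hP, hΓ, hlmi, hblock, htr⟩ => ⟨_, h.2 P Γ hP hΓ hlmi hblock htr⟩⟩, h⟩) ⟨?_, ?_⟩
  · intro X hX hlyap htr
    have hP : (γ • X⁻¹).PosDef := hX.inv.smul hγ
    have hX' := smul_nonsing_inv_smul_nonsing_inv ((isUnit_iff_isUnit_det _).1 hX.isUnit) hγ.ne'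
    obtain ⟨Γ, hΓ, hblock, hΓtr⟩ := (gain_iff hP).2 (by rwa [hX'])
    exact ⟨Γ, hP, hΓ, (lmi_iff hP).2 (by rwa [hX']), hblock, hΓtr⟩
  · intro P Γ hP hΓ hlmi hblock htr
    exact ⟨hP.inv.smul hγ, (lmi_iff hP).1 hlmi, (gain_iff hP).1 ⟨Γ, hΓ, hblock, htr⟩⟩

/-- Nonstrict version: for stable `A` and `γ > 0`, there is `X ≻ 0` with
`A X + X Aᵀ + B Bᵀ ⪯ 0` and `tr(C X Cᵀ) ≤ γ²` iff there are `P ≻ 0`, `Γ ⪰ 0` with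
`[[Aᵀ P + P A, P B],[Bᵀ P, −γ I]] ⪯ 0`, `[[P, Cᵀ],[C, Γ]] ⪰ 0` and `tr Γ ≤ γ`.
Moreover, in both directions the certificates can be chosen related by `X = γ P⁻¹`
(equivalently `P = γ X⁻¹`). -/
theorem nonstrict_lyapunov_iff_nonstrict_lmi {n m p : ℕ}
    (A : Matrix (Fin n) (Fin n) ℝ) (B : Matrix (Fin n) (Fin m) ℝ)
    (C : Matrix (Fin p) (Fin n) ℝ) (γ : ℝ)
    (hA : IsStableMatrix A) (hγ : 0 < γ) :
    ((∃ X : Matrix (Fin n) (Fin n) ℝ, X.PosDef ∧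
        (-(A * X + X * Aᵀ + B * Bᵀ)).PosSemidef ∧ (C * X * Cᵀ).trace ≤ γ ^ 2) ↔
      (∃ (P : Matrix (Fin n) (Fin n) ℝ) (Γ : Matrix (Fin p) (Fin p) ℝ),
        P.PosDef ∧ Γ.PosSemidef ∧
        (-(fromBlocks (Aᵀ * P + P * A) (P * B) (Bᵀ * P)
            (-(γ • (1 : Matrix (Fin m) (Fin m) ℝ))))).PosSemidef ∧
        (fromBlocks P Cᵀ C Γ).PosSemidef ∧ Γ.trace ≤ γ)) ∧
    (∀ X : Matrix (Fin n) (Fin n) ℝ, X.PosDef →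
      (-(A * X + X * Aᵀ + B * Bᵀ)).PosSemidef → (C * X * Cᵀ).trace ≤ γ ^ 2 →
      ∃ Γ : Matrix (Fin p) (Fin p) ℝ,
        (γ • X⁻¹).PosDef ∧ Γ.PosSemidef ∧
        (-(fromBlocks (Aᵀ * (γ • X⁻¹) + (γ • X⁻¹) * A) ((γ • X⁻¹) * B) (Bᵀ * (γ • X⁻¹))
            (-(γ • (1 : Matrix (Fin m) (Fin m) ℝ))))).PosSemidef ∧
        (fromBlocks (γ • X⁻¹) Cᵀ C Γ).PosSemidef ∧ Γ.trace ≤ γ) ∧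
    (∀ (P : Matrix (Fin n) (Fin n) ℝ) (Γ : Matrix (Fin p) (Fin p) ℝ),
      P.PosDef → Γ.PosSemidef →
      (-(fromBlocks (Aᵀ * P + P * A) (P * B) (Bᵀ * P)
          (-(γ • (1 : Matrix (Fin m) (Fin m) ℝ))))).PosSemidef →
      (fromBlocks P Cᵀ C Γ).PosSemidef → Γ.trace ≤ γ →
      (γ • P⁻¹).PosDef ∧
        (-(A * (γ • P⁻¹) + (γ • P⁻¹) * Aᵀ + B * Bᵀ)).PosSemidef ∧
        (C * (γ • P⁻¹) * Cᵀ).trace ≤ γ ^ 2) :=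
  nonstrict_lyapunov_iff_nonstrict_lmi_general A B C γ hγ
end

section
/- (Minimality is preserved by closing the loop.) Assume V ≻ 0, R ≻ 0, W ⪰ 0, Q ⪰ 0, the pair (A, W^{1/2}) is controllable, and the pair (Q^{1/2}, A) is observable. Let q ≥ 0 and let K = (A_K ∈ ℝ^{q×q}, B_K ∈ ℝ^{q×p}, C_K ∈ ℝ^{m×q}, D_K ∈ ℝ^{m×p}) be an order-q policy with A_cl(K) stable. Then: (i) if (A_K, B_K) is controllable, the closed-loop pair (A_cl(K), B_cl(K)) is controllable; (ii) if (C_K, A_K) is observable, the closed-loop pair (C_cl(K), A_cl(K)) is observable. -/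
open Matrix

noncomputable section

/-- The positive semidefinite square root of a positive semidefinite matrix
(the Mathlib definition of December 2024, since removed from Mathlib). -/
def Matrix.PosSemidef.sqrt {n : Type*} [Fintype n] [DecidableEq n]
    {A : Matrix n n ℝ} (hA : A.PosSemidef) : Matrix n n ℝ :=
  hA.1.eigenvectorUnitary.1 * diagonal ((√·) ∘ hA.1.eigenvalues) *
  (star hA.1.eigenvectorUnitary : Matrix n n ℝ)

/-- The pair `(A, B)` is controllable if the controllability matrix
`[B, AB, …, A^{card−1}B]` has full row rank. -/
def Controllable {ι μ : Type*} [Fintype ι] [DecidableEq ι] [Fintype μ]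
    (A : Matrix ι ι ℝ) (B : Matrix ι μ ℝ) : Prop :=
  (Matrix.of fun (i : ι) (kj : Fin (Fintype.card ι) × μ) => (A ^ (kj.1 : ℕ) * B) i kj.2).rank
    = Fintype.card ι

/-- Closed-loop `A` matrix of an order-`q` policy `(A_K, B_K, C_K, D_K)`. -/
def AclG {n m p q : ℕ} (A : Matrix (Fin n) (Fin n) ℝ) (B : Matrix (Fin n) (Fin m) ℝ)
    (C : Matrix (Fin p) (Fin n) ℝ) (AK : Matrix (Fin q) (Fin q) ℝ)
    (BK : Matrix (Fin q) (Fin p) ℝ) (CK : Matrix (Fin m) (Fin q) ℝ)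
    (DK : Matrix (Fin m) (Fin p) ℝ) : Matrix (Fin n ⊕ Fin q) (Fin n ⊕ Fin q) ℝ :=
  fromBlocks (A + B * DK * C) (B * CK) (BK * C) AK

/-- Closed-loop `B` matrix of an order-`q` policy. -/
def BclG {n m p q : ℕ} {W : Matrix (Fin n) (Fin n) ℝ} {V : Matrix (Fin p) (Fin p) ℝ}
    (hW : W.PosSemidef) (hV : V.PosDef) (B : Matrix (Fin n) (Fin m) ℝ)
    (BK : Matrix (Fin q) (Fin p) ℝ) (DK : Matrix (Fin m) (Fin p) ℝ) :
    Matrix (Fin n ⊕ Fin q) (Fin n ⊕ Fin p) ℝ :=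
  fromBlocks hW.sqrt (B * DK * hV.posSemidef.sqrt) 0 (BK * hV.posSemidef.sqrt)

/-- Closed-loop `C` matrix of an order-`q` policy. -/
def CclG {n m p q : ℕ} {Q : Matrix (Fin n) (Fin n) ℝ} {R : Matrix (Fin m) (Fin m) ℝ}
    (hQ : Q.PosSemidef) (hR : R.PosDef) (C : Matrix (Fin p) (Fin n) ℝ)
    (CK : Matrix (Fin m) (Fin q) ℝ) (DK : Matrix (Fin m) (Fin p) ℝ) :
    Matrix (Fin n ⊕ Fin m) (Fin n ⊕ Fin q) ℝ :=
  fromBlocks hQ.sqrt 0 (hR.posSemidef.sqrt * DK * C) (hR.posSemidef.sqrt * CK)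

/-!
A pair `(A, B)` is controllable iff no nonzero row vector `x` has `x Aᵏ B = 0` for all `k`
(Cayley–Hamilton turns the finitely many conditions of the rank test into all `k`).
Suppose `x A_clᵏ B_cl = 0` for all `k`. Since `V^{1/2}` is invertible, every `y = x A_clᵏ`
satisfies `y₁ W^{1/2} = 0` and `y₁ B D_K + y₂ B_K = 0`; the latter cancels the coupling of the
plant state to the controller through `C`, so `y₁` evolves under `A` alone and vanishes by
controllability of `(A, W^{1/2})`. Then `y₂` evolves under `A_K` with `y₂ B_K = 0`, so it vanishes
by controllability of `(A_K, B_K)`. Observability is the same statement for the transposed closed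
loop, which is the closed loop of the dual plant `(Aᵀ, Cᵀ, Bᵀ)` under the dual policy.
-/

namespace Matrix

theorem PosDef.isUnit_sqrt {ι : Type*} [Fintype ι] [DecidableEq ι] {A : Matrix ι ι ℝ}
    (hA : A.PosDef) : IsUnit hA.posSemidef.sqrt :=
  (Unitary.isUnit_coe.mul <| isUnit_diagonal.2 <| Pi.isUnit_iff.2 fun i =>
    (Real.sqrt_pos.2 (hA.eigenvalues_pos i)).ne'.isUnit).mul
    (Unitary.isUnit_coe (U := star hA.1.eigenvectorUnitary))

theorem rank_eq_card_iff_forall_vecMul_eq_zero {K ι κ : Type*} [Field K] [Fintype ι] [Fintype κ]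
    (M : Matrix ι κ K) : M.rank = Fintype.card ι ↔ ∀ x : ι → K, x ᵥ* M = 0 → x = 0 := by
  rw [rank_eq_finrank_span_row, ← Set.finrank, eq_comm,
    ← linearIndependent_iff_card_eq_finrank_span, ← vecMul_injective_iff, ← coe_vecMulLinear,
    injective_iff_map_eq_zero]
  rfl

theorem vecMul_pow_mul_eq_zero {K ι μ : Type*} [Field K] [Fintype ι] [DecidableEq ι] [Nonempty ι]
    {A : Matrix ι ι K} {B : Matrix ι μ K} {x : ι → K}
    (h : ∀ k < Fintype.card ι, x ᵥ* (A ^ k * B) = 0) (k : ℕ) : x ᵥ* (A ^ k * B) = 0 := by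
  have hdeg : (Polynomial.X ^ k %ₘ A.charpoly).natDegree < Fintype.card ι := by
    rw [← A.charpoly_natDegree_eq_dim]
    refine Polynomial.natDegree_modByMonic_lt _ A.charpoly_monic fun h1 => ?_
    exact Fintype.card_ne_zero (α := ι) (by simpa [h1] using A.charpoly_natDegree_eq_dim.symm)
  rw [A.pow_eq_aeval_mod_charpoly, Polynomial.aeval_eq_sum_range' hdeg, Matrix.sum_mul, vecMul_sum]
  refine Finset.sum_eq_zero fun i hi => ?_
  rw [smul_mul, vecMul_smul, h i (Finset.mem_range.1 hi), smul_zero]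

end Matrix

theorem controllable_iff_forall_vecMul_eq_zero {ι μ : Type*} [Fintype ι] [DecidableEq ι]
    [Fintype μ] {A : Matrix ι ι ℝ} {B : Matrix ι μ ℝ} :
    Controllable A B ↔ ∀ x : ι → ℝ, (∀ k : ℕ, x ᵥ* (A ^ k * B) = 0) → x = 0 := by
  rw [Controllable, rank_eq_card_iff_forall_vecMul_eq_zero]
  refine forall_congr' fun x => imp_congr_left ⟨fun hx k => ?_, fun hx => funext fun kj => ?_⟩
  · cases isEmpty_or_nonempty ι
    · rw [Subsingleton.elim x 0, zero_vecMul]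
    · exact vecMul_pow_mul_eq_zero (fun k hk => funext fun j => congrFun hx (⟨k, hk⟩, j)) k
  · exact congrFun (hx kj.1) kj.2

theorem Controllable.eq_zero_of_vecMul_eq_zero {ι μ : Type*} [Fintype ι] [DecidableEq ι]
    [Fintype μ] {A : Matrix ι ι ℝ} {B : Matrix ι μ ℝ} (h : Controllable A B)
    {y : ℕ → ι → ℝ} (hy : ∀ k, y (k + 1) = y k ᵥ* A) (hyB : ∀ k, y k ᵥ* B = 0) : y = 0 := by
  have hpow (k : ℕ) : y k = y 0 ᵥ* A ^ k := by
    induction k with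
    | zero => rw [pow_zero, vecMul_one]
    | succ k ih => rw [hy, ih, vecMul_vecMul, pow_succ]
  have h0 : y 0 = 0 :=
    controllable_iff_forall_vecMul_eq_zero.1 h _ fun k => by rw [← vecMul_vecMul, ← hpow, hyB]
  funext k
  rw [hpow, h0, zero_vecMul, Pi.zero_apply]

section ClosedLoop

variable {ι κ μ π σ : Type*} [Fintype ι] [Fintype κ] [Fintype μ] [Fintype π]
  {A : Matrix ι ι ℝ} {B : Matrix ι μ ℝ} {C : Matrix π ι ℝ} {AK : Matrix κ κ ℝ}
  {BK : Matrix κ π ℝ} {CK : Matrix μ κ ℝ} {DK : Matrix μ π ℝ}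

theorem closedLoop_left_kernel [DecidableEq π] {Ws : Matrix ι σ ℝ} {Vs : Matrix π π ℝ}
    (hVs : IsUnit Vs) {y : ι ⊕ κ → ℝ} (hy : y ᵥ* fromBlocks Ws (B * DK * Vs) 0 (BK * Vs) = 0) :
    (y ∘ Sum.inl) ᵥ* Ws = 0 ∧ (y ∘ Sum.inl) ᵥ* (B * DK) + (y ∘ Sum.inr) ᵥ* BK = 0 := by
  rw [vecMul_fromBlocks, vecMul_zero, add_zero, ← Sum.elim_zero_zero, Sum.elim_eq_iff] at hy
  refine ⟨hy.1, vecMul_injective_iff_isUnit.2 hVs ?_⟩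
  change (_ + _) ᵥ* Vs = 0 ᵥ* Vs
  rw [add_vecMul, vecMul_vecMul, vecMul_vecMul, hy.2, zero_vecMul]

theorem closedLoop_vecMul_of_left_kernel {y : ι ⊕ κ → ℝ}
    (hy : (y ∘ Sum.inl) ᵥ* (B * DK) + (y ∘ Sum.inr) ᵥ* BK = 0) :
    y ᵥ* fromBlocks (A + B * DK * C) (B * CK) (BK * C) AK =
      Sum.elim ((y ∘ Sum.inl) ᵥ* A) ((y ∘ Sum.inl) ᵥ* (B * CK) + (y ∘ Sum.inr) ᵥ* AK) := by
  rw [vecMul_fromBlocks]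
  congr 1
  calc (y ∘ Sum.inl) ᵥ* (A + B * DK * C) + (y ∘ Sum.inr) ᵥ* (BK * C)
      = (y ∘ Sum.inl) ᵥ* A + ((y ∘ Sum.inl) ᵥ* (B * DK) + (y ∘ Sum.inr) ᵥ* BK) ᵥ* C := by
        simp only [vecMul_add, add_vecMul, vecMul_vecMul, Matrix.mul_assoc]
        abel
    _ = (y ∘ Sum.inl) ᵥ* A := by rw [hy, zero_vecMul, add_zero]

theorem controllable_closedLoop [Fintype σ] [DecidableEq ι] [DecidableEq κ] [DecidableEq π]
    {Ws : Matrix ι σ ℝ} {Vs : Matrix π π ℝ} (hVs : IsUnit Vs)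
    (hAW : Controllable A Ws) (hK : Controllable AK BK) :
    Controllable (fromBlocks (A + B * DK * C) (B * CK) (BK * C) AK)
      (fromBlocks Ws (B * DK * Vs) 0 (BK * Vs)) := by
  refine controllable_iff_forall_vecMul_eq_zero.2 fun x hx => ?_
  set y : ℕ → ι ⊕ κ → ℝ := fun k => x ᵥ* fromBlocks (A + B * DK * C) (B * CK) (BK * C) AK ^ k
  have hker (k : ℕ) := closedLoop_left_kernel hVs (y := y k) (by rw [vecMul_vecMul]; exact hx k)
  have hy (k : ℕ) : y (k + 1) = Sum.elim ((y k ∘ Sum.inl) ᵥ* A)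
      ((y k ∘ Sum.inl) ᵥ* (B * CK) + (y k ∘ Sum.inr) ᵥ* AK) := by
    rw [← closedLoop_vecMul_of_left_kernel (hker k).2, vecMul_vecMul, ← pow_succ]
  have hinl : (fun k => y k ∘ Sum.inl) = 0 :=
    hAW.eq_zero_of_vecMul_eq_zero (fun k => by rw [hy]; rfl) fun k => (hker k).1
  have hinr : (fun k => y k ∘ Sum.inr) = 0 := by
    refine hK.eq_zero_of_vecMul_eq_zero (fun k => ?_) fun k => ?_
    · rw [hy, Sum.elim_comp_inr, congrFun hinl k, Pi.zero_apply, zero_vecMul, zero_add]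
    · simpa only [congrFun hinl k, Pi.zero_apply, zero_vecMul, zero_add] using (hker k).2
  have hx0 : x = y 0 := by simp only [y, pow_zero, vecMul_one]
  rw [hx0]
  ext (i | i)
  exacts [congrFun (congrFun hinl 0) i, congrFun (congrFun hinr 0) i]

end ClosedLoop

theorem AclG_transpose {n m p q : ℕ} (A : Matrix (Fin n) (Fin n) ℝ)
    (B : Matrix (Fin n) (Fin m) ℝ) (C : Matrix (Fin p) (Fin n) ℝ)
    (AK : Matrix (Fin q) (Fin q) ℝ) (BK : Matrix (Fin q) (Fin p) ℝ)
    (CK : Matrix (Fin m) (Fin q) ℝ) (DK : Matrix (Fin m) (Fin p) ℝ) :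
    (AclG A B C AK BK CK DK)ᵀ = AclG Aᵀ Cᵀ Bᵀ AKᵀ CKᵀ BKᵀ DKᵀ := by
  simp only [AclG, fromBlocks_transpose, transpose_add, transpose_mul, Matrix.mul_assoc]

theorem CclG_transpose {n m p q : ℕ} {Q : Matrix (Fin n) (Fin n) ℝ} {R : Matrix (Fin m) (Fin m) ℝ}
    (hQ : Q.PosSemidef) (hR : R.PosDef) (C : Matrix (Fin p) (Fin n) ℝ)
    (CK : Matrix (Fin m) (Fin q) ℝ) (DK : Matrix (Fin m) (Fin p) ℝ) :
    (CclG hQ hR C CK DK)ᵀ = fromBlocks hQ.sqrtᵀ (Cᵀ * DKᵀ * hR.posSemidef.sqrtᵀ) 0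
      (CKᵀ * hR.posSemidef.sqrtᵀ) := by
  simp only [CclG, fromBlocks_transpose, transpose_mul, transpose_zero, Matrix.mul_assoc]

theorem closed_loop_preserves_minimality_general {n m p q : ℕ}
    (A : Matrix (Fin n) (Fin n) ℝ) (B : Matrix (Fin n) (Fin m) ℝ)
    (C : Matrix (Fin p) (Fin n) ℝ)
    {Q W : Matrix (Fin n) (Fin n) ℝ} {R : Matrix (Fin m) (Fin m) ℝ}
    {V : Matrix (Fin p) (Fin p) ℝ}
    (hQ : Q.PosSemidef) (hW : W.PosSemidef) (hR : R.PosDef) (hV : V.PosDef)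
    (hAW : Controllable A hW.sqrt) (hQA : Controllable Aᵀ (hQ.sqrt)ᵀ)
    (AK : Matrix (Fin q) (Fin q) ℝ) (BK : Matrix (Fin q) (Fin p) ℝ)
    (CK : Matrix (Fin m) (Fin q) ℝ) (DK : Matrix (Fin m) (Fin p) ℝ) :
    (Controllable AK BK →
      Controllable (AclG A B C AK BK CK DK) (BclG hW hV B BK DK)) ∧
    (Controllable AKᵀ CKᵀ →
      Controllable (AclG A B C AK BK CK DK)ᵀ (CclG hQ hR C CK DK)ᵀ) := by
  refine ⟨controllable_closedLoop hV.isUnit_sqrt hAW, fun hK => ?_⟩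
  rw [AclG_transpose, CclG_transpose]
  exact controllable_closedLoop ((isUnit_transpose _).2 hR.isUnit_sqrt) hQA hK

/-- Minimality is preserved by closing the loop: (i) if `(A_K, B_K)` is controllable then
`(A_cl, B_cl)` is controllable; (ii) if `(C_K, A_K)` is observable then `(C_cl, A_cl)`
is observable. -/
theorem closed_loop_preserves_minimality {n m p q : ℕ}
    (A : Matrix (Fin n) (Fin n) ℝ) (B : Matrix (Fin n) (Fin m) ℝ)
    (C : Matrix (Fin p) (Fin n) ℝ)
    {Q W : Matrix (Fin n) (Fin n) ℝ} {R : Matrix (Fin m) (Fin m) ℝ}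
    {V : Matrix (Fin p) (Fin p) ℝ}
    (hQ : Q.PosSemidef) (hW : W.PosSemidef) (hR : R.PosDef) (hV : V.PosDef)
    (hAW : Controllable A hW.sqrt) (hQA : Controllable Aᵀ (hQ.sqrt)ᵀ)
    (AK : Matrix (Fin q) (Fin q) ℝ) (BK : Matrix (Fin q) (Fin p) ℝ)
    (CK : Matrix (Fin m) (Fin q) ℝ) (DK : Matrix (Fin m) (Fin p) ℝ)
    (hstab : IsStableMatrix (AclG A B C AK BK CK DK)) :
    (Controllable AK BK →
      Controllable (AclG A B C AK BK CK DK) (BclG hW hV B BK DK)) ∧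
    (Controllable AKᵀ CKᵀ →
      Controllable (AclG A B C AK BK CK DK)ᵀ (CclG hQ hR C CK DK)ᵀ) :=
  closed_loop_preserves_minimality_general A B C hQ hW hR hV hAW hQA AK BK CK DK
end
end
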